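/- arXiv:1902.08765 — 7 statements merged into one kernel-verified Lean document; each statement's English description precedes it below -/
import Mathlib

section
/- If a finite union-closed family F of finite sets contains a one-element set {a}, then a belongs to at least half of the members of F, i.e., 2·|{A ∈ F. a ∈ A}| ≥ |F|. -/
variable {α : Type*} [DecidableEq α]

/-- A family is union-closed. -/
def UC (F : Finset (Finset α)) : Prop := ∀ A ∈ F, ∀ B ∈ F, A ∪ B ∈ F

/-- Number of members of `F` containing `a`. -/
def cnt (a : α) (F : Finset (Finset α)) : ℕ := (F.filter (fun A => a ∈ A)).card

/-- Union-ucClosure: all unions of nonempty subfamilies. -/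
def ucClosure (F : Finset (Finset α)) : Finset (Finset α) :=
  (F.powerset.filter (fun G => G.Nonempty)).image (fun G => G.sup id)

/-- FC-family. -/
def IsFC (Fc : Finset (Finset α)) : Prop :=
  ∀ F : Finset (Finset α), UC F → Fc ⊆ F →
    ∃ a ∈ Fc.sup id, 2 * cnt a F ≥ F.card

theorem singleton_member_abundant (F : Finset (Finset α)) (a : α)
    (hUC : UC F) (hne : F.Nonempty) (ha : ({a} : Finset α) ∈ F) :
    2 * cnt a F ≥ F.card := by
  classical
  set T := F.filter (fun A => a ∈ A) with hT
  set S := F.filter (fun A => a ∉ A) with hS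
  have hcard : S.card ≤ T.card := by
    apply Finset.card_le_card_of_injOn (fun A => A ∪ {a})
    · intro A hA
      simp only [hS, Finset.mem_filter] at hA
      simp only [hT, Finset.mem_filter]
      exact Finset.mem_filter.mpr ⟨hUC A (Finset.mem_filter.mp hA).1 {a} ha, by simp⟩
    · intro A hA B hB h
      simp only [hS, Finset.coe_filter, Set.mem_setOf_eq] at hA hB
      have h2 : (A ∪ {a}).erase a = (B ∪ {a}).erase a := by
        simp only at h; rw [h]
      have eA : (A ∪ {a}).erase a = A := by
        rw [Finset.erase_union_distrib]
        simp [Finset.erase_eq_of_notMem hA.2]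
      have eB : (B ∪ {a}).erase a = B := by
        rw [Finset.erase_union_distrib]
        simp [Finset.erase_eq_of_notMem hB.2]
      rw [eA, eB] at h2; exact h2
  have hsplit : F.card = T.card + S.card := by
    rw [hT, hS]
    exact (Finset.card_filter_add_card_filter_not _).symm
  have : cnt a F = T.card := rfl
  omega
end

section
/- A finite family F satisfies the Frankl condition if and only if there exists a weight function w : α → ℕ with w(a) > 0 for some a ∈ ⋃F, such that 2·(∑_{A∈F} ∑_{a∈A} w(a)) ≥ (∑_{a∈⋃F} w(a)) · |F|. -/
/-!
Exchanging the order of summation turns `∑ A ∈ F, ∑ a ∈ A, w a` into `∑ a, w a * cnt a F`, so the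
weight inequality says that the `w`-weighted average of the degrees `cnt a F` is at least `|F| / 2`.
Such an average is at most the largest degree among points of positive weight, and a point mass
at an element of large degree gives the converse.
-/

variable {α : Type*} [DecidableEq α]

open Finset

lemma sum_sum_eq_sum_mul_cnt (F : Finset (Finset α)) (w : α → ℕ) :
    ∑ A ∈ F, ∑ a ∈ A, w a = ∑ a ∈ F.sup id, w a * cnt a F := by
  have hA : ∀ A ∈ F, ∑ a ∈ A, w a = ∑ a ∈ F.sup id, if a ∈ A then w a else 0 := fun A hA => by
    have hsub : A ⊆ F.sup id := le_sup (f := id) hA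
    rw [sum_ite_mem, inter_eq_right.mpr hsub]
  rw [sum_congr rfl hA, sum_comm]
  refine sum_congr rfl fun a _ => ?_
  rw [← sum_filter, sum_const, smul_eq_mul, mul_comm, cnt]

lemma two_mul_sum_mul_cnt_lt (F : Finset (Finset α)) (s : Finset α) (w : α → ℕ)
    (hcnt : ∀ a ∈ s, 2 * cnt a F < F.card) (hw : ∃ a ∈ s, 0 < w a) :
    2 * ∑ a ∈ s, w a * cnt a F < (∑ a ∈ s, w a) * F.card := by
  obtain ⟨b, hb, hwb⟩ := hw
  rw [mul_sum, sum_mul]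
  refine sum_lt_sum (fun a ha => ?_) ⟨b, hb, ?_⟩
  · rw [mul_left_comm]
    exact Nat.mul_le_mul_left _ (hcnt a ha).le
  · rw [mul_left_comm]
    exact Nat.mul_lt_mul_of_pos_left (hcnt b hb) hwb

theorem frankl_iff_weight_general (F : Finset (Finset α)) :
    (∃ a ∈ F.sup id, 2 * cnt a F ≥ F.card) ↔
      ∃ w : α → ℕ, (∃ a ∈ F.sup id, 0 < w a) ∧
        2 * (∑ A ∈ F, ∑ a ∈ A, w a) ≥ (∑ a ∈ F.sup id, w a) * F.card := by
  simp_rw [sum_sum_eq_sum_mul_cnt F]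
  constructor
  · rintro ⟨a, ha, hcnt⟩
    exact ⟨Pi.single a 1, ⟨a, ha, by simp⟩, by simpa [Pi.single_apply, ha] using hcnt⟩
  · rintro ⟨w, hw, hsum⟩
    by_contra! hcnt
    exact (two_mul_sum_mul_cnt_lt F _ w hcnt hw).not_ge hsum

theorem frankl_iff_weight (F : Finset (Finset α)) (hne : F.Nonempty) :
    (∃ a ∈ F.sup id, 2 * cnt a F ≥ F.card) ↔
      ∃ w : α → ℕ, (∃ a ∈ F.sup id, 0 < w a) ∧
        2 * (∑ A ∈ F, ∑ a ∈ A, w a) ≥ (∑ a ∈ F.sup id, w a) * F.card :=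
  frankl_iff_weight_general F
end

section
/- If F is union-closed, F_c ⊆ F, S = ⋃F_c, and K ∩ S = ∅, then the projection {A \ K. A ∈ hc(K,S) ∩ F} is union-closed and moreover closed under unions with members of F_c (i.e., unions of its members with members of F_c lie in it). -/
variable {α : Type*} [DecidableEq α]

/-- The S-hypercube with base K. -/
def hc (K S : Finset α) : Finset (Finset α) :=
  (K ∪ S).powerset.filter (fun A => K ⊆ A)

theorem mem_hc {K S A : Finset α} : A ∈ hc K S ↔ K ⊆ A ∧ A ⊆ K ∪ S := by
  rw [hc, Finset.mem_filter, Finset.mem_powerset, and_comm]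

theorem uc_hc (K S : Finset α) : UC (hc K S) := fun A hA B hB => by
  rw [mem_hc] at hA hB ⊢
  exact ⟨hA.1.trans Finset.subset_union_left, Finset.union_subset hA.2 hB.2⟩

theorem union_mem_hc {K S A B : Finset α} (hA : A ∈ hc K S) (hB : B ⊆ S) :
    A ∪ B ∈ hc K S := by
  rw [mem_hc] at hA ⊢
  exact ⟨hA.1.trans Finset.subset_union_left,
    Finset.union_subset hA.2 (hB.trans Finset.subset_union_right)⟩

theorem UC.inter {F G : Finset (Finset α)} (hF : UC F) (hG : UC G) : UC (F ∩ G) :=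
  fun A hA B hB => by
    rw [Finset.mem_inter] at hA hB ⊢
    exact ⟨hF A hA.1 B hB.1, hG A hA.2 B hB.2⟩

theorem UC.image_sdiff {G : Finset (Finset α)} (hG : UC G) (K : Finset α) :
    UC (G.image (· \ K)) := by
  rintro _ hA' _ hB'
  obtain ⟨A, hA, rfl⟩ := Finset.mem_image.mp hA'
  obtain ⟨B, hB, rfl⟩ := Finset.mem_image.mp hB'
  exact Finset.mem_image.mpr ⟨A ∪ B, hG A hA B hB, Finset.union_sdiff_distrib A B K⟩

theorem union_mem_image_sdiff {G : Finset (Finset α)} {A B K : Finset α}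
    (hAB : A ∪ B ∈ G) (hBK : Disjoint B K) : A \ K ∪ B ∈ G.image (· \ K) :=
  Finset.mem_image.mpr
    ⟨A ∪ B, hAB, by rw [Finset.union_sdiff_distrib, Finset.sdiff_eq_self_of_disjoint hBK]⟩

theorem projection_uc_for (F Fc : Finset (Finset α)) (K S : Finset α)
    (hUC : UC F) (hsub : Fc ⊆ F) (hS : S = Fc.sup id) (hKS : K ∩ S = ∅) :
    UC ((hc K S ∩ F).image (fun A => A \ K)) ∧
    (∀ A ∈ (hc K S ∩ F).image (fun A => A \ K), ∀ B ∈ Fc,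
      A ∪ B ∈ (hc K S ∩ F).image (fun A => A \ K)) := by
  refine ⟨((uc_hc K S).inter hUC).image_sdiff K, ?_⟩
  rintro _ hA' B hB
  obtain ⟨A, hA, rfl⟩ := Finset.mem_image.mp hA'
  rw [Finset.mem_inter] at hA
  have hBS : B ⊆ S := hS ▸ Finset.le_sup (f := id) hB
  have hBK : Disjoint B K :=
    (Finset.disjoint_iff_inter_eq_empty.mpr hKS).symm.mono_left hBS
  exact union_mem_image_sdiff
    (Finset.mem_inter.mpr ⟨union_mem_hc hA.1 hBS, hUC A hA.2 B (hsub hB)⟩) hBK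
end

section
/- Let F be a nonempty finite union-closed family and F_c ⊆ F. Let w : α → ℤ be nonnegative with w(a) = 0 for all a ∈ ⋃F \ ⋃F_c and w(a) > 0 for some a ∈ ⋃F_c. If for every family F' ⊆ powerset(⋃F_c) that is union-closed and closed under unions with members of F_c, the share ∑_{A∈F'}(2·weight(A) − weight(⋃F_c)) is nonnegative, then F satisfies the Frankl condition: there is a ∈ ⋃F_c with 2·|{A ∈ F. a ∈ A}| ≥ |F|. -/
variable {α : Type*} [DecidableEq α]

theorem frankl_of_all_extensions_nonneg (F Fc : Finset (Finset α))
    (hne : F.Nonempty) (hUC : UC F) (hsub : Fc ⊆ F)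
    (w : α → ℤ) (hw0 : ∀ a, 0 ≤ w a)
    (hwz : ∀ a ∈ F.sup id \ Fc.sup id, w a = 0)
    (hwp : ∃ a ∈ Fc.sup id, 0 < w a)
    (hshares : ∀ F' : Finset (Finset α), F' ⊆ (Fc.sup id).powerset → UC F' →
      (∀ A ∈ F', ∀ B ∈ Fc, A ∪ B ∈ F') →
      0 ≤ ∑ A ∈ F', (2 * (∑ a ∈ A, w a) - ∑ a ∈ Fc.sup id, w a)) :
    ∃ a ∈ Fc.sup id, 2 * cnt a F ≥ F.card := by
  by_contra hcon
  push_neg at hcon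
  set U := Fc.sup id with hUdef
  have hBU : ∀ B ∈ Fc, B ⊆ U := fun B hB => Finset.le_sup (f := id) hB
  -- the key nonnegativity, obtained by fibering F over A \ U
  have key : 0 ≤ ∑ A ∈ F, (2 * (∑ a ∈ A ∩ U, w a) - ∑ a ∈ U, w a) := by
    rw [← Finset.sum_fiberwise_of_maps_to (g := fun A => A \ U)
      (t := F.image (fun A => A \ U)) (fun A hA => Finset.mem_image_of_mem _ hA)]
    apply Finset.sum_nonneg
    intro T hT
    have hinj : ∀ A ∈ F.filter (fun A => A \ U = T),
        ∀ B ∈ F.filter (fun A => A \ U = T), A ∩ U = B ∩ U → A = B := by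
      intro A hA B hB hAB
      have hA' := (Finset.mem_filter.1 hA).2
      have hB' := (Finset.mem_filter.1 hB).2
      rw [← Finset.sdiff_union_inter A U, ← Finset.sdiff_union_inter B U, hA', hB', hAB]
    rw [← Finset.sum_image (g := fun A => A ∩ U) (f := fun S => 2 * (∑ a ∈ S, w a) - ∑ a ∈ U, w a) hinj]
    set G := (F.filter (fun A => A \ U = T)).image (fun A => A ∩ U) with hG
    have hmemG : ∀ S, S ∈ G ↔ ∃ A ∈ F, A \ U = T ∧ A ∩ U = S := by
      intro S
      simp only [hG, Finset.mem_image, Finset.mem_filter]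
      constructor
      · rintro ⟨A, ⟨hAF, hAT⟩, hAS⟩; exact ⟨A, hAF, hAT, hAS⟩
      · rintro ⟨A, hAF, hAT, hAS⟩; exact ⟨A, ⟨hAF, hAT⟩, hAS⟩
    apply hshares G
    · intro S hS
      obtain ⟨A, _, _, hAS⟩ := (hmemG S).1 hS
      exact Finset.mem_powerset.2 (hAS ▸ Finset.inter_subset_right)
    · intro S₁ hS₁ S₂ hS₂
      obtain ⟨A₁, hA₁F, hA₁T, hA₁S⟩ := (hmemG S₁).1 hS₁
      obtain ⟨A₂, hA₂F, hA₂T, hA₂S⟩ := (hmemG S₂).1 hS₂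
      refine (hmemG _).2 ⟨A₁ ∪ A₂, hUC _ hA₁F _ hA₂F, ?_, ?_⟩
      · rw [Finset.union_sdiff_distrib, hA₁T, hA₂T, Finset.union_self]
      · rw [Finset.union_inter_distrib_right, hA₁S, hA₂S]
    · intro S hS B hB
      obtain ⟨A, hAF, hAT, hAS⟩ := (hmemG S).1 hS
      refine (hmemG _).2 ⟨A ∪ B, hUC _ hAF _ (hsub hB), ?_, ?_⟩
      · rw [Finset.union_sdiff_distrib, hAT,
          Finset.sdiff_eq_empty_iff_subset.2 (hBU B hB), Finset.union_empty]
      · rw [Finset.union_inter_distrib_right, hAS,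
          Finset.inter_eq_left.2 (hBU B hB)]
  -- rewrite the sum elementwise
  have hsum : ∑ A ∈ F, (2 * (∑ a ∈ A ∩ U, w a) - ∑ a ∈ U, w a)
      = ∑ a ∈ U, ((2 * (cnt a F : ℤ) - F.card) * w a) := by
    have h2 : ∑ A ∈ F, ∑ a ∈ A ∩ U, w a = ∑ a ∈ U, (cnt a F : ℤ) * w a := by
      have h1 : ∀ A : Finset α, ∑ a ∈ A ∩ U, w a
          = ∑ a ∈ U, if a ∈ A then w a else 0 := by
        intro A
        rw [Finset.inter_comm, ← Finset.filter_mem_eq_inter, Finset.sum_filter]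
      simp_rw [h1]
      rw [Finset.sum_comm]
      refine Finset.sum_congr rfl fun a _ => ?_
      rw [← Finset.sum_filter, Finset.sum_const, nsmul_eq_mul, cnt]
    rw [Finset.sum_sub_distrib, Finset.sum_const, ← Finset.mul_sum, h2, nsmul_eq_mul,
      Finset.mul_sum, Finset.mul_sum, ← Finset.sum_sub_distrib]
    exact Finset.sum_congr rfl fun a _ => by ring
  -- strict negativity
  have hneg : ∑ a ∈ U, ((2 * (cnt a F : ℤ) - F.card) * w a) < 0 := by
    obtain ⟨a₀, ha₀U, ha₀w⟩ := hwp
    have h0 : (0:ℤ) = ∑ a ∈ U, (0:ℤ) := by simp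
    rw [h0]
    apply Finset.sum_lt_sum
    · intro a haU
      apply mul_nonpos_of_nonpos_of_nonneg _ (hw0 a)
      have := hcon a haU
      have : (2 * cnt a F : ℤ) < F.card := by exact_mod_cast this
      push_cast
      linarith
    · refine ⟨a₀, ha₀U, ?_⟩
      apply mul_neg_of_neg_of_pos _ ha₀w
      have := hcon a₀ ha₀U
      have : (2 * cnt a₀ F : ℤ) < F.card := by exact_mod_cast this
      push_cast
      linarith
  rw [hsum] at key
  exact absurd key (not_le.2 hneg)
end

section
/- A family F_c is an FC-family if there exists a weight function w on ⋃F_c (w : α → ℕ, positive somewhere on ⋃F_c) such that every union-closed extension F' ∈ uce(F_c) has nonnegative share: ∑_{A∈F'}(2·∑_{a∈A}w(a) − ∑_{a∈⋃F_c}w(a)) ≥ 0. -/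
variable {α : Type*} [DecidableEq α]

/-- Union-closed extensions of Fc. -/
def UCE (Fc F' : Finset (Finset α)) : Prop :=
  F' ⊆ (Fc.sup id).powerset ∧ UC F' ∧ ∀ A ∈ F', ∀ B ∈ Fc, A ∪ B ∈ F'

/-! Split the members of a union-closed `F ⊇ Fc` according to their part `A \ ⋃Fc` outside
`⋃Fc`. Within one class, `A ↦ A ∩ ⋃Fc` is injective and its image is a union-closed extension of
`Fc`, so each class, and hence `F`, has nonnegative share. Counting the other way, the share of `F`
is `∑_{a ∈ ⋃Fc} w(a) (2 cnt(a, F) - |F|)`, which would be negative if no element of `⋃Fc` lay in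
at least half of the members of `F`. -/

variable {R : Type*}

section Share

variable [CommRing R]

-- Members are weighed by their trace on `U`, so the share makes sense for any family.
def share (w : α → R) (U : Finset α) (F : Finset (Finset α)) : R :=
  ∑ A ∈ F, (2 * ∑ a ∈ A ∩ U, w a - ∑ a ∈ U, w a)

theorem share_of_subset_powerset {w : α → R} {U : Finset α} {F : Finset (Finset α)}
    (hF : F ⊆ U.powerset) :
    share w U F = ∑ A ∈ F, (2 * ∑ a ∈ A, w a - ∑ a ∈ U, w a) :=
  Finset.sum_congr rfl fun A hA => by
    rw [Finset.inter_eq_left.mpr (Finset.mem_powerset.mp (hF hA))]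

theorem sum_sum_inter_eq_sum_mul_cnt (w : α → R) (U : Finset α) (F : Finset (Finset α)) :
    ∑ A ∈ F, ∑ a ∈ A ∩ U, w a = ∑ a ∈ U, w a * cnt a F :=
  calc ∑ A ∈ F, ∑ a ∈ A ∩ U, w a = ∑ A ∈ F, ∑ a ∈ U, if a ∈ A then w a else 0 :=
        Finset.sum_congr rfl fun A _ => by
          rw [Finset.inter_comm, ← Finset.filter_mem_eq_inter, Finset.sum_filter]
    _ = ∑ a ∈ U, w a * cnt a F := by
      rw [Finset.sum_comm]
      refine Finset.sum_congr rfl fun a _ => ?_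
      rw [← Finset.sum_filter, Finset.sum_const, cnt, nsmul_eq_mul, mul_comm]

theorem share_eq_sum_mul (w : α → R) (U : Finset α) (F : Finset (Finset α)) :
    share w U F = ∑ a ∈ U, w a * (2 * cnt a F - F.card) := by
  simp only [share, Finset.sum_sub_distrib, sum_sum_inter_eq_sum_mul_cnt, Finset.sum_const,
    nsmul_eq_mul, mul_sub, Finset.mul_sum]
  ring_nf

theorem share_image_inter {w : α → R} {U : Finset α} {F : Finset (Finset α)}
    (hF : Set.InjOn (· ∩ U) F) :
    share w U (F.image (· ∩ U)) = share w U F := by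
  simp only [share, Finset.sum_image hF, Finset.inter_assoc, Finset.inter_self]

theorem share_eq_sum_share_fiber (w : α → R) (U : Finset α) (F : Finset (Finset α)) :
    share w U F = ∑ D ∈ F.image (· \ U), share w U (F.filter (· \ U = D)) :=
  (Finset.sum_fiberwise_of_maps_to (fun _ => Finset.mem_image_of_mem _) _).symm

end Share

theorem injOn_inter_filter_sdiff_eq (F : Finset (Finset α)) (U D : Finset α) :
    Set.InjOn (· ∩ U) (F.filter (· \ U = D) : Set (Finset α)) := by
  intro A hA B hB hAB
  simp only [Finset.coe_filter, Set.mem_ofPred_eq] at hA hB hAB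
  rw [← Finset.sdiff_union_inter A U, ← Finset.sdiff_union_inter B U, hA.2, hB.2, hAB]

theorem inter_union_inter_mem_image_filter_sdiff_eq {F : Finset (Finset α)} (hF : UC F)
    {U D A B : Finset α} (hA : A ∈ F) (hAD : A \ U = D) (hB : B ∈ F) (hBD : B \ U ⊆ D) :
    A ∩ U ∪ B ∩ U ∈ (F.filter (· \ U = D)).image (· ∩ U) := by
  refine Finset.mem_image.mpr ⟨A ∪ B, Finset.mem_filter.mpr ⟨hF A hA B hB, ?_⟩,
    Finset.union_inter_distrib_right A B U⟩
  rw [Finset.union_sdiff_distrib, hAD, Finset.union_eq_left.mpr hBD]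

theorem UCE_image_inter_filter_sdiff_eq {Fc F : Finset (Finset α)} (hF : UC F) (hFc : Fc ⊆ F)
    (D : Finset α) :
    UCE Fc ((F.filter (· \ Fc.sup id = D)).image (· ∩ Fc.sup id)) := by
  have hsubU {B : Finset α} (hB : B ∈ Fc) : B ⊆ Fc.sup id := Finset.le_sup (f := id) hB
  refine ⟨?_, ?_, ?_⟩
  · simp only [Finset.subset_iff, Finset.mem_image, Finset.mem_powerset]
    rintro _ ⟨A, -, rfl⟩
    exact Finset.inter_subset_right
  · intro S hS T hT
    obtain ⟨A, hA, rfl⟩ := Finset.mem_image.mp hS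
    obtain ⟨B, hB, rfl⟩ := Finset.mem_image.mp hT
    rw [Finset.mem_filter] at hA hB
    exact inter_union_inter_mem_image_filter_sdiff_eq hF hA.1 hA.2 hB.1 hB.2.le
  · intro S hS B hB
    obtain ⟨A, hA, rfl⟩ := Finset.mem_image.mp hS
    rw [Finset.mem_filter] at hA
    have h := inter_union_inter_mem_image_filter_sdiff_eq hF hA.1 hA.2 (hFc hB)
      (by rw [Finset.sdiff_eq_empty_iff_subset.mpr (hsubU hB)]; exact Finset.empty_subset D)
    rwa [Finset.inter_eq_left.mpr (hsubU hB)] at h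

theorem share_nonneg_of_UCE [CommRing R] [PartialOrder R] [IsOrderedRing R]
    {Fc F : Finset (Finset α)} {w : α → R}
    (hshares : ∀ F', UCE Fc F' → 0 ≤ share w (Fc.sup id) F') (hF : UC F) (hFc : Fc ⊆ F) :
    0 ≤ share w (Fc.sup id) F := by
  rw [share_eq_sum_share_fiber]
  refine Finset.sum_nonneg fun D _ => ?_
  rw [← share_image_inter (injOn_inter_filter_sdiff_eq F _ D)]
  exact hshares _ (UCE_image_inter_filter_sdiff_eq hF hFc D)

theorem exists_card_le_two_mul_cnt [CommRing R] [LinearOrder R] [IsStrictOrderedRing R]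
    {w : α → R} {U : Finset α} {F : Finset (Finset α)} (hw : ∀ a ∈ U, 0 ≤ w a)
    (hpos : ∃ a ∈ U, 0 < w a) (hshare : 0 ≤ share w U F) :
    ∃ a ∈ U, F.card ≤ 2 * cnt a F := by
  by_contra! hlt
  have hneg (a : α) (ha : a ∈ U) : (2 * cnt a F - F.card : R) < 0 := by
    rw [sub_neg]; exact_mod_cast hlt a ha
  obtain ⟨a, ha, hwa⟩ := hpos
  refine hshare.not_gt ?_
  rw [share_eq_sum_mul]
  exact Finset.sum_neg' (fun b hb => mul_nonpos_of_nonneg_of_nonpos (hw b hb) (hneg b hb).le)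
    ⟨a, ha, mul_neg_of_pos_of_neg hwa (hneg a ha)⟩

theorem isFC_of_weight (Fc : Finset (Finset α)) (w : α → ℕ)
    (hwp : ∃ a ∈ Fc.sup id, 0 < w a)
    (hshares : ∀ F' : Finset (Finset α), UCE Fc F' →
      0 ≤ ∑ A ∈ F', (2 * (∑ a ∈ A, (w a : ℤ)) - ∑ a ∈ Fc.sup id, (w a : ℤ))) :
    IsFC Fc := by
  intro F hF hFc
  have hshares' (F' : Finset (Finset α)) (h : UCE Fc F') :
      0 ≤ share (fun a => (w a : ℤ)) (Fc.sup id) F' := by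
    rw [share_of_subset_powerset h.1]
    exact hshares F' h
  obtain ⟨a, ha, hle⟩ := exists_card_le_two_mul_cnt (fun a _ => Int.natCast_nonneg (w a))
    (by simpa using hwp) (share_nonneg_of_UCE hshares' hF hFc)
  exact ⟨a, ha, hle⟩
end

section
/- Irreducible bases are unique: if F and F' are both irreducible finite families and closure(F) = closure(F'), then F = F'. -/
variable {α : Type*} [DecidableEq α]

/-- A family is irreducible if no member is the union of a nonempty subfamily
of the other members. -/
def Irred (G : Finset (Finset α)) : Prop :=
  ∀ A ∈ G, ¬ ∃ G' : Finset (Finset α), G' ⊆ G.erase A ∧ G'.Nonempty ∧ A = G'.sup id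

/-! `ucClosure` is `supClosure` in the lattice of finite sets, and the argument works in any
join-semilattice. If `s` and `t` generate the same sup-closure and `a ∈ s` were missing from `t`,
it would be a join of members of `t` strictly below it, each of which is a join of members of `s`
strictly below `a`, so `a` would already be generated by `s \ {a}`. -/

section SupIrredundant

variable {L : Type*} [SemilatticeSup L] {s t : Set L} {a : L}

lemma mem_supClosure_inter_Iic (ha : a ∈ supClosure s) : a ∈ supClosure (s ∩ Set.Iic a) := by
  obtain ⟨u, hu, hus, rfl⟩ := ha
  exact ⟨u, hu, fun b hb => ⟨hus hb, Finset.le_sup' id hb⟩, rfl⟩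

lemma mem_supClosure_inter_Iio (ha : a ∈ supClosure s) (has : a ∉ s) :
    a ∈ supClosure (s ∩ Set.Iio a) := by
  refine supClosure_mono ?_ (mem_supClosure_inter_Iic ha)
  rintro b ⟨hbs, hba⟩
  exact ⟨hbs, hba.lt_of_ne (ne_of_mem_of_not_mem hbs has)⟩

def SupIrredundant (s : Set L) : Prop := ∀ a ∈ s, a ∉ supClosure (s \ {a})

theorem SupIrredundant.subset_of_supClosure_eq (hs : SupIrredundant s)
    (h : supClosure s = supClosure t) : s ⊆ t := by
  intro a has
  by_contra hat
  have hat' : a ∈ supClosure (t ∩ Set.Iio a) := by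
    refine mem_supClosure_inter_Iio ?_ hat
    rw [← h]
    exact subset_supClosure has
  have hbelow : t ∩ Set.Iio a ⊆ supClosure (s \ {a}) := by
    rintro b ⟨hbt, hba⟩
    have hb : b ∈ supClosure s := by
      rw [h]
      exact subset_supClosure hbt
    refine supClosure_mono ?_ (mem_supClosure_inter_Iic hb)
    exact fun c ⟨hcs, hcb⟩ => ⟨hcs, (hcb.trans_lt hba).ne⟩
  exact hs a has (supClosure_idem (s \ {a}) ▸ supClosure_mono hbelow hat')

end SupIrredundant

lemma coe_ucClosure (F : Finset (Finset α)) :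
    (ucClosure F : Set (Finset α)) = supClosure (F : Set (Finset α)) := by
  ext A
  simp only [ucClosure, Finset.coe_image, Finset.coe_filter, Finset.mem_powerset, Set.mem_image]
  constructor
  · rintro ⟨G, ⟨hGF, hG⟩, rfl⟩
    exact ⟨G, hG, hGF, Finset.sup'_eq_sup hG id⟩
  · rintro ⟨G, hG, hGF, rfl⟩
    exact ⟨G, ⟨hGF, hG⟩, (Finset.sup'_eq_sup hG id).symm⟩

lemma Irred.supIrredundant {F : Finset (Finset α)} (hF : Irred F) :
    SupIrredundant (F : Set (Finset α)) := by
  rintro A hA ⟨G, hG, hGF, rfl⟩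
  rw [← Finset.coe_erase, Finset.coe_subset] at hGF
  exact hF _ hA ⟨G, hGF, hG, Finset.sup'_eq_sup hG id⟩

theorem irreducible_unique (F F' : Finset (Finset α))
    (hF : Irred F) (hF' : Irred F') (h : ucClosure F = ucClosure F') : F = F' := by
  have hcl : supClosure (F : Set (Finset α)) = supClosure F' := by
    rw [← coe_ucClosure, ← coe_ucClosure, h]
  exact Finset.coe_injective <| (hF.supIrredundant.subset_of_supClosure_eq hcl).antisymm
    (hF'.supIrredundant.subset_of_supClosure_eq hcl.symm)
end

section
/- Covering preserves FC-status: (1) if F_c is an FC-family and there exists F_c' isomorphic to F_c with F_c' ⊆ closure(F), then F is an FC-family; (2) if N_c is not an FC-family and there exists N_c' isomorphic to N_c with closure(F) ⊆ closure(N_c') ∪ {∅}, then F is not an FC-family. -/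
variable {α : Type*} [DecidableEq α]

/-- Isomorphism of families: a bijection between their unions mapping one onto the other. -/
def Iso (F F' : Finset (Finset α)) : Prop :=
  ∃ f : α → α, Set.InjOn f (F.sup id : Finset α) ∧
    (F.sup id).image f = F'.sup id ∧ F.image (fun A => A.image f) = F'

/-!
The FC-property only concerns union-closed supersets, and a union-closed family containing `F`
contains all of `ucClosure F`; so an FC-family inside `ucClosure F` forces the FC-property of
`F`, while `F` inside `ucClosure N ∪ {∅}` transfers it from `F` to `N` (adding `∅` to a
union-closed family keeps it union-closed, changes no count, and only adds a member). On an
infinite ground type an isomorphism extends to a permutation of the whole type, and permuting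
the points of every family involved preserves all counts, so FC-status is an isomorphism
invariant.
-/

open Finset

theorem subset_ucClosure (F : Finset (Finset α)) : F ⊆ ucClosure F := fun A hA =>
  mem_image.2 ⟨{A}, by simpa using hA, sup_singleton⟩

theorem UC.sup_mem {G : Finset (Finset α)} (hG : UC G) {s : Finset (Finset α)}
    (hs : s.Nonempty) (hsG : s ⊆ G) : s.sup id ∈ G := by
  induction hs using Nonempty.cons_induction with
  | singleton A => simpa using hsG
  | cons A s _ _ ih =>
    rw [cons_subset] at hsG
    rw [sup_cons]
    exact hG _ hsG.1 _ (ih hsG.2)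

theorem UC.ucClosure_subset {F G : Finset (Finset α)} (hG : UC G) (hFG : F ⊆ G) :
    ucClosure F ⊆ G := by
  intro B hB
  obtain ⟨s, hs, rfl⟩ := mem_image.1 hB
  rw [mem_filter, mem_powerset] at hs
  exact hG.sup_mem hs.2 (hs.1.trans hFG)

theorem sup_ucClosure (F : Finset (Finset α)) : (ucClosure F).sup id = F.sup id := by
  refine le_antisymm (Finset.sup_le fun B hB => ?_) (sup_mono (subset_ucClosure F))
  obtain ⟨s, hs, rfl⟩ := mem_image.1 hB
  exact sup_mono (mem_powerset.1 (mem_filter.1 hs).1)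

theorem Set.InjOn.exists_perm_eqOn {β : Type*} [Infinite β] {s : Set β} (hs : s.Finite)
    {f : β → β} (hf : s.InjOn f) : ∃ π : Equiv.Perm β, s.EqOn π f := by
  have hlt : Cardinal.mk s < Cardinal.mk β :=
    hs.lt_aleph0.trans_le (Cardinal.aleph0_le_mk β)
  obtain ⟨π, hπ⟩ := Cardinal.extend_function_of_lt ⟨s.domRestrict f, hf.injective⟩ hlt
    ⟨Equiv.refl β⟩
  exact ⟨π, fun x hx => hπ ⟨x, hx⟩⟩

theorem Iso.exists_perm [Infinite α] {F F' : Finset (Finset α)} (h : Iso F F') :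
    ∃ π : Equiv.Perm α, F.image (fun A => A.image π) = F' := by
  obtain ⟨f, hf, -, rfl⟩ := h
  obtain ⟨π, hπ⟩ := hf.exists_perm_eqOn (F.sup id).finite_toSet
  refine ⟨π, image_congr fun A hA => image_congr fun a ha => hπ ?_⟩
  exact mem_coe.2 (mem_sup.2 ⟨A, hA, ha⟩)

theorem image_image_perm_symm (π : Equiv.Perm α) (F : Finset (Finset α)) :
    (F.image fun A => A.image π).image (fun A => A.image π.symm) = F := by
  simp [image_image, Function.comp_def]

theorem sup_image_image {β : Type*} [DecidableEq β] (f : α → β) (F : Finset (Finset α)) :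
    (F.image fun A => A.image f).sup id = (F.sup id).image f := by
  ext a
  simp only [mem_sup, mem_image, id]
  grind

theorem UC.image_image {β : Type*} [DecidableEq β] {H : Finset (Finset α)} (hH : UC H)
    (f : α → β) : UC (H.image fun A => A.image f) := by
  simp only [UC, mem_image]
  rintro _ ⟨A, hA, rfl⟩ _ ⟨B, hB, rfl⟩
  exact ⟨A ∪ B, hH A hA B hB, image_union A B⟩

theorem card_image_image_perm (π : Equiv.Perm α) (H : Finset (Finset α)) :
    (H.image fun A => A.image π).card = H.card :=
  card_image_of_injective H (image_injective π.injective)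

theorem cnt_image_image_perm (π : Equiv.Perm α) (a : α) (H : Finset (Finset α)) :
    cnt (π a) (H.image fun A => A.image π) = cnt a H := by
  rw [cnt, filter_image, card_image_of_injective _ (image_injective π.injective)]
  simp [cnt]

theorem IsFC.image_image_perm {F : Finset (Finset α)} (hF : IsFC F) (π : Equiv.Perm α) :
    IsFC (F.image fun A => A.image π) := by
  intro H hH hFH
  set G := H.image fun A => A.image π.symm
  have hHG : H = G.image fun A => A.image π := by
    simpa using (image_image_perm_symm π.symm H).symm
  have hFG : F ⊆ G := by
    simpa only [image_image_perm_symm] using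
      image_subset_image (f := fun A => A.image π.symm) hFH
  obtain ⟨a, ha, hcnt⟩ := hF G (hH.image_image _) hFG
  refine ⟨π a, sup_image_image π F ▸ mem_image_of_mem π ha, ?_⟩
  rwa [hHG, cnt_image_image_perm, card_image_image_perm]

theorem Iso.isFC_iff [Infinite α] {F F' : Finset (Finset α)} (h : Iso F F') :
    IsFC F ↔ IsFC F' := by
  obtain ⟨π, rfl⟩ := h.exists_perm
  refine ⟨fun hF => hF.image_image_perm π, fun hF => ?_⟩
  simpa only [image_image_perm_symm] using hF.image_image_perm π.symm

theorem UC.insert_empty {H : Finset (Finset α)} (hH : UC H) : UC (insert ∅ H) := by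
  intro A hA B hB
  rcases mem_insert.1 hA with rfl | hA <;> rcases mem_insert.1 hB with rfl | hB
  · simp
  · simpa using mem_insert_of_mem hB
  · simpa using mem_insert_of_mem hA
  · exact mem_insert_of_mem (hH _ hA _ hB)

theorem cnt_insert_empty (a : α) (H : Finset (Finset α)) : cnt a (insert ∅ H) = cnt a H := by
  simp [cnt, filter_insert]

theorem IsFC.of_subset_ucClosure {Fc F : Finset (Finset α)} (hFc : IsFC Fc)
    (hsub : Fc ⊆ ucClosure F) : IsFC F := by
  intro H hH hFH
  obtain ⟨a, ha, hcnt⟩ := hFc H hH (hsub.trans (hH.ucClosure_subset hFH))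
  exact ⟨a, sup_ucClosure F ▸ sup_mono (f := id) hsub ha, hcnt⟩

theorem IsFC.of_subset_ucClosure_union_empty {F N : Finset (Finset α)} (hF : IsFC F)
    (hsub : F ⊆ ucClosure N ∪ {∅}) : IsFC N := by
  intro H hH hNH
  have hFH : F ⊆ insert ∅ H := fun A hA => by
    rcases mem_union.1 (hsub hA) with hA | hA
    · exact mem_insert_of_mem (hH.ucClosure_subset hNH hA)
    · exact mem_singleton.1 hA ▸ mem_insert_self _ _
  obtain ⟨a, ha, hcnt⟩ := hF _ hH.insert_empty hFH
  have hsup : F.sup id ≤ N.sup id := by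
    simpa [sup_union, sup_ucClosure] using sup_mono (f := id) hsub
  refine ⟨a, hsup ha, ?_⟩
  rw [cnt_insert_empty] at hcnt
  exact hcnt.trans' (card_le_card (subset_insert _ _))

theorem covering_preserves_FC_status [Infinite α] :
    (∀ Fc F : Finset (Finset α), IsFC Fc →
      (∃ Fc' : Finset (Finset α), Iso Fc Fc' ∧ Fc' ⊆ ucClosure F) → IsFC F) ∧
    (∀ Nc F : Finset (Finset α), ¬ IsFC Nc →
      (∃ Nc' : Finset (Finset α), Iso Nc Nc' ∧
        ucClosure F ⊆ ucClosure Nc' ∪ {(∅ : Finset α)}) → ¬ IsFC F) := by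
  constructor
  · rintro Fc F hFc ⟨Fc', hiso, hsub⟩
    exact (hiso.isFC_iff.1 hFc).of_subset_ucClosure hsub
  · rintro Nc F hNc ⟨Nc', hiso, hsub⟩ hF
    have hNc' : IsFC Nc' :=
      hF.of_subset_ucClosure_union_empty ((subset_ucClosure F).trans hsub)
    exact hNc (hiso.isFC_iff.2 hNc')
end
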